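/- arXiv:2107.14432 — 4 statements merged into one kernel-verified Lean document; each statement's English description precedes it below -/
import Mathlib

section
/- For any sequence of diagonal positive definite matrices Q_s and step sizes α_s > 0 with ∑_{s=1}^t Q_s/α_s = √V_t/α_t, the single-step proximal formulation x_{t+1} = argmin_x ⟨m_t, x⟩ + (1/(2α_t))‖V_t^{1/4}(x-x_t)‖₂² generates the same iterates as the accumulated formulation x_{t+1} = argmin_x ⟨m_{1:t}, x⟩ + ∑_{s=1}^t (1/(2α_s))‖Q_s^{1/2}(x - x_s)‖₂², where m_{1:t} = ∑_{s=1}^t m_s. -/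
open Finset

lemma quad_min {n : ℕ} (A g : Fin n → ℝ) (hA : ∀ i, 0 < A i)
    (h : (Fin n → ℝ) → ℝ) (z : Fin n → ℝ)
    (hh : ∀ y, h y - h z = ∑ i, (A i / 2 * (y i - z i) ^ 2 + g i * (y i - z i))) :
    (∀ y, h z ≤ h y) ↔ ∀ i, g i = 0 := by
  constructor
  · intro hmin i
    have hAi := hA i
    have hAne : A i ≠ 0 := ne_of_gt hAi
    set y := Function.update z i (z i - g i / A i) with hy
    have h1 := hmin y
    have h2 := hh y
    have hsum : ∑ j, (A j / 2 * (y j - z j) ^ 2 + g j * (y j - z j))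
        = - (g i ^ 2) / (2 * A i) := by
      rw [Fintype.sum_eq_single i]
      · have hyi : y i = z i - g i / A i := Function.update_self i _ z
        rw [hyi]
        field_simp
        ring
      · intro j hj
        have : y j = z j := Function.update_of_ne hj _ z
        rw [this]; ring
    rw [hsum] at h2
    have h3 : 0 ≤ -g i ^ 2 / (2 * A i) := by linarith
    have h4 : g i ^ 2 ≤ 0 := by
      by_contra hc; push_neg at hc
      have : -g i ^ 2 / (2 * A i) < 0 :=
        div_neg_of_neg_of_pos (by linarith) (by linarith)
      linarith
    have h5 : g i ^ 2 = 0 := le_antisymm h4 (sq_nonneg _)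
    exact pow_eq_zero_iff (two_ne_zero) |>.mp h5
  · intro hg y
    have h2 := hh y
    have hnn : 0 ≤ ∑ i, (A i / 2 * (y i - z i) ^ 2 + g i * (y i - z i)) := by
      apply Finset.sum_nonneg
      intro i _
      rw [hg i, zero_mul, add_zero]
      have := hA i
      positivity
    linarith

/-- with `∑_{s=1}^t Q_s/α_s = √V_t/α_t`, the single-step proximal
formulation and the accumulated formulation generate the same iterates: any iterate
sequence in which each `x_{t+1}` minimizes the single-step objective also has `x_{t+1}`
minimizing the accumulated objective (and conversely). -/
theorem stmt1 {n : ℕ} (T : ℕ)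
    (q : ℕ → Fin n → ℝ) (hq : ∀ s i, 0 ≤ q s i)
    (α : ℕ → ℝ) (hα : ∀ s, 0 < α s)
    (sqv : ℕ → Fin n → ℝ)  -- the diagonal entries of √V_t
    (hsqv : ∀ t ∈ Icc 1 T, ∀ i, sqv t i / α t = ∑ s ∈ Icc 1 t, q s i / α s)
    (hpos : ∀ t ∈ Icc 1 T, ∀ i, 0 < sqv t i)
    (m : ℕ → Fin n → ℝ) (x : ℕ → Fin n → ℝ)
    (Fsingle Gaccum : ℕ → (Fin n → ℝ) → ℝ)
    (hF : ∀ t y, Fsingle t y = (∑ i, m t i * y i) +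
      (1 / (2 * α t)) * ∑ i, sqv t i * (y i - x t i) ^ 2)
    (hG : ∀ t y, Gaccum t y = (∑ i, (∑ s ∈ Icc 1 t, m s i) * y i) +
      ∑ s ∈ Icc 1 t, (1 / (2 * α s)) * ∑ i, q s i * (y i - x s i) ^ 2) :
    (∀ t ∈ Icc 1 T, ∀ y, Fsingle t (x (t + 1)) ≤ Fsingle t y) ↔
    (∀ t ∈ Icc 1 T, ∀ y, Gaccum t (x (t + 1)) ≤ Gaccum t y) := by
  have hαne : ∀ s, α s ≠ 0 := fun s => ne_of_gt (hα s)
  -- F-min ↔ first order condition P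
  have hFiff : ∀ t ∈ Icc 1 T, (∀ y, Fsingle t (x (t + 1)) ≤ Fsingle t y) ↔
      (∀ i, m t i + sqv t i / α t * (x (t + 1) i - x t i) = 0) := by
    intro t ht
    refine quad_min (fun i => sqv t i / α t)
      (fun i => m t i + sqv t i / α t * (x (t + 1) i - x t i))
      (fun i => div_pos (hpos t ht i) (hα t)) (Fsingle t) (x (t + 1)) ?_
    intro y
    rw [hF t y, hF t (x (t + 1)), Finset.mul_sum, Finset.mul_sum,
      ← Finset.sum_add_distrib, ← Finset.sum_add_distrib, ← Finset.sum_sub_distrib]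
    apply Finset.sum_congr rfl
    intro i _
    have hne := hαne t
    field_simp
    ring
  -- G-min ↔ first order condition R
  have hGiff : ∀ t ∈ Icc 1 T, (∀ y, Gaccum t (x (t + 1)) ≤ Gaccum t y) ↔
      (∀ i, (∑ s ∈ Icc 1 t, m s i)
        + ∑ s ∈ Icc 1 t, q s i / α s * (x (t + 1) i - x s i) = 0) := by
    intro t ht
    refine quad_min (fun i => sqv t i / α t)
      (fun i => (∑ s ∈ Icc 1 t, m s i)
        + ∑ s ∈ Icc 1 t, q s i / α s * (x (t + 1) i - x s i))
      (fun i => div_pos (hpos t ht i) (hα t)) (Gaccum t) (x (t + 1)) ?_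
    intro y
    have hsw : ∀ w : Fin n → ℝ,
        (∑ s ∈ Icc 1 t, (1 / (2 * α s)) * ∑ i, q s i * (w i - x s i) ^ 2)
        = ∑ i, ∑ s ∈ Icc 1 t, (1 / (2 * α s)) * (q s i * (w i - x s i) ^ 2) := by
      intro w
      simp_rw [Finset.mul_sum]
      exact Finset.sum_comm
    rw [hG t y, hG t (x (t + 1)), hsw y, hsw (x (t + 1)),
      ← Finset.sum_add_distrib, ← Finset.sum_add_distrib, ← Finset.sum_sub_distrib]
    apply Finset.sum_congr rfl
    intro i _
    simp only [hsqv t ht i]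
    have key : ∀ s ∈ Icc 1 t,
        (1 / (2 * α s)) * (q s i * (y i - x s i) ^ 2)
          - (1 / (2 * α s)) * (q s i * (x (t + 1) i - x s i) ^ 2)
        = q s i / α s / 2 * (y i - x (t + 1) i) ^ 2
          + q s i / α s * (x (t + 1) i - x s i) * (y i - x (t + 1) i) := by
      intro s _
      have hne := hαne s
      field_simp
      ring
    have hsub : (∑ s ∈ Icc 1 t, (1 / (2 * α s)) * (q s i * (y i - x s i) ^ 2))
        - (∑ s ∈ Icc 1 t, (1 / (2 * α s)) * (q s i * (x (t + 1) i - x s i) ^ 2))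
        = (∑ s ∈ Icc 1 t, q s i / α s) / 2 * (y i - x (t + 1) i) ^ 2
          + (∑ s ∈ Icc 1 t, q s i / α s * (x (t + 1) i - x s i)) * (y i - x (t + 1) i) := by
      rw [← Finset.sum_sub_distrib, Finset.sum_congr rfl key, Finset.sum_add_distrib]
      congr 1
      · rw [← Finset.sum_mul, ← Finset.sum_div]
      · rw [← Finset.sum_mul]
    linear_combination hsub
  rw [forall₂_congr hFiff, forall₂_congr hGiff]
  -- now pure first-order-condition equivalence, by induction
  have hA1 : ∀ i, sqv 1 i / α 1 = q 1 i / α 1 → True := fun _ _ => trivial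
  constructor
  · intro hP
    have main : ∀ t, 1 ≤ t → t ≤ T → ∀ i, (∑ s ∈ Icc 1 t, m s i)
        + ∑ s ∈ Icc 1 t, q s i / α s * (x (t + 1) i - x s i) = 0 := by
      intro t ht1
      induction t, ht1 using Nat.le_induction with
      | base =>
        intro h1 i
        have h1T : (1 : ℕ) ∈ Icc 1 T := Finset.mem_Icc.mpr ⟨le_refl _, h1⟩
        have hP1 := hP 1 h1T i
        have hA := hsqv 1 h1T i
        simp only [Finset.Icc_self, Finset.sum_singleton] at hA ⊢
        linear_combination hP1 - (x 2 i - x 1 i) * hA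
      | succ t ht ih =>
        intro hle i
        have htT : t ≤ T := le_trans (Nat.le_succ t) hle
        have htmem : (t + 1) ∈ Icc 1 T := Finset.mem_Icc.mpr ⟨Nat.le_add_left 1 t, hle⟩
        have ht1mem : t ∈ Icc 1 T := Finset.mem_Icc.mpr ⟨ht, htT⟩
        have hRt := ih htT i
        have hPt1 := hP (t + 1) htmem i
        have hA2 := hsqv (t + 1) htmem i
        rw [Finset.sum_Icc_succ_top (Nat.le_add_left 1 t)] at hA2
        have e1 : ∑ s ∈ Icc 1 t, q s i / α s * (x (t + 1 + 1) i - x s i)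
            = (∑ s ∈ Icc 1 t, q s i / α s * (x (t + 1) i - x s i))
              + (∑ s ∈ Icc 1 t, q s i / α s) * (x (t + 1 + 1) i - x (t + 1) i) := by
          rw [Finset.sum_mul, ← Finset.sum_add_distrib]
          exact Finset.sum_congr rfl fun s _ => by ring
        rw [Finset.sum_Icc_succ_top (Nat.le_add_left 1 t),
          Finset.sum_Icc_succ_top (Nat.le_add_left 1 t)]
        linear_combination hRt + hPt1 + e1 - (x (t + 1 + 1) i - x (t + 1) i) * hA2
    intro t htmem
    have ⟨h1, h2⟩ := Finset.mem_Icc.mp htmem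
    exact main t h1 h2
  · intro hR t htmem i
    have ⟨h1t, htT⟩ := Finset.mem_Icc.mp htmem
    match t, h1t with
    | 1, _ =>
      have h1T : (1 : ℕ) ∈ Icc 1 T := htmem
      have hR1 := hR 1 h1T i
      have hA := hsqv 1 h1T i
      simp only [Finset.Icc_self, Finset.sum_singleton] at hA hR1
      linear_combination hR1 + (x 2 i - x 1 i) * hA
    | (k + 1 + 1), _ =>
      set t := k + 1 with htk
      have htT' : t ≤ T := le_trans (Nat.le_succ t) htT
      have htmem' : t ∈ Icc 1 T := Finset.mem_Icc.mpr ⟨Nat.le_add_left 1 k, htT'⟩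
      have hRt := hR t htmem' i
      have hRt1 := hR (t + 1) htmem i
      have hA2 := hsqv (t + 1) htmem i
      rw [Finset.sum_Icc_succ_top (Nat.le_add_left 1 t)] at hA2
      rw [Finset.sum_Icc_succ_top (Nat.le_add_left 1 t),
        Finset.sum_Icc_succ_top (Nat.le_add_left 1 t)] at hRt1
      have e1 : ∑ s ∈ Icc 1 t, q s i / α s * (x (t + 1 + 1) i - x s i)
          = (∑ s ∈ Icc 1 t, q s i / α s * (x (t + 1) i - x s i))
            + (∑ s ∈ Icc 1 t, q s i / α s) * (x (t + 1 + 1) i - x (t + 1) i) := by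
        rw [Finset.sum_mul, ← Finset.sum_add_distrib]
        exact Finset.sum_congr rfl fun s _ => by ring
      linear_combination hRt1 - hRt - e1 + (x (t + 1 + 1) i - x (t + 1) i) * hA2
end

section
/- When all regularization parameters λ₁ = λ₂₁ = λ₂ = 0, the sparse-group-lasso adaptive algorithm (maintaining z_t = z_{t-1} + m_t - (Q_t/α_t)x_t with Q_t/α_t = √V_t/α_t - √V_{t-1}/α_{t-1}, s_t = -z_t, x_{t+1} = (√V_t/α_t)^{-1} s_t) satisfies x_{t+1} = x_t - α_t m_t/√V_t for all t ≥ 1. -/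
/-- with all regularization parameters zero, the algorithm maintaining
`z_t = z_{t-1} + m_t - (Q_t/α_t) x_t` with `Q_t/α_t = √V_t/α_t - √V_{t-1}/α_{t-1}`,
`s_t = -z_t`, `x_{t+1} = (√V_t/α_t)⁻¹ s_t` satisfies `x_{t+1} = x_t - α_t m_t/√V_t`
for all `t ≥ 1`.  Here `sqv t` denotes the (diagonal entries of) `√V_t`, with `V_0 = 0`. -/
theorem stmt5 {n : ℕ}
    (sqv : ℕ → Fin n → ℝ) (hsqv0 : ∀ i, sqv 0 i = 0)
    (hsqv : ∀ t, 1 ≤ t → ∀ i, 0 < sqv t i)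
    (α : ℕ → ℝ) (hα : ∀ t, 0 < α t)
    (m z x : ℕ → Fin n → ℝ)
    (hz0 : ∀ i, z 0 i = 0)
    (hz : ∀ t, 1 ≤ t → ∀ i,
      z t i = z (t - 1) i + m t i - (sqv t i / α t - sqv (t - 1) i / α (t - 1)) * x t i)
    (hx : ∀ t, 1 ≤ t → ∀ i, x (t + 1) i = (sqv t i / α t)⁻¹ * (-(z t i))) :
    ∀ t, 1 ≤ t → ∀ i, x (t + 1) i = x t i - α t * m t i / sqv t i := by
  intro t ht i
  have hprev : z (t - 1) i = -(sqv (t - 1) i / α (t - 1)) * x t i := by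
    rcases Nat.exists_eq_add_of_le ht with ⟨k, hk⟩
    cases k with
    | zero =>
      simp [hk, hz0, hsqv0]
    | succ k =>
      have h1 : 1 ≤ 1 + k := by omega
      have hxk := hx (1 + k) h1 i
      have hne1 : sqv (1 + k) i ≠ 0 := ne_of_gt (hsqv _ h1 i)
      have hne2 : α (1 + k) ≠ 0 := ne_of_gt (hα _)
      have ht1 : t - 1 = 1 + k := by omega
      have ht2 : t = 1 + k + 1 := by omega
      rw [ht1, ht2, hxk]
      field_simp
  have hne : sqv t i ≠ 0 := ne_of_gt (hsqv t ht i)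
  have hαne : α t ≠ 0 := ne_of_gt (hα t)
  rw [hx t ht i, hz t ht i, hprev]
  field_simp
  ring
end

section
/- Let m_t = γ m_{t-1} + g_t with m_0 = 0 and 0 ≤ γ < 1, and let σ_{t,i} be defined by σ_{t,i} = g_{t,i}² + η σ_{t-1,i} with σ_{0,i} = 0 and γ ≤ η ≤ 1. Then σ_{t,i} ≥ (1-γ)(m_{t,i}² + (η - γ) ∑_{s=1}^{t-1} η^{t-s-1} m_{s,i}²). -/
open Finset

/-- with `m_t = γ m_{t-1} + g_t`, `m_0 = 0`, `0 ≤ γ < 1`, and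
`σ_t = g_t² + η σ_{t-1}`, `σ_0 = 0`, `γ ≤ η ≤ 1`, one has
`σ_t ≥ (1-γ)(m_t² + (η-γ) ∑_{s=1}^{t-1} η^{t-s-1} m_s²)`. -/
theorem stmt6 (γ η : ℝ) (hγ0 : 0 ≤ γ) (hγ1 : γ < 1) (hγη : γ ≤ η) (hη : η ≤ 1)
    (g m σ : ℕ → ℝ) (hm0 : m 0 = 0) (hσ0 : σ 0 = 0)
    (hm : ∀ t, 1 ≤ t → m t = γ * m (t - 1) + g t)
    (hσ : ∀ t, 1 ≤ t → σ t = (g t) ^ 2 + η * σ (t - 1)) :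
    ∀ t, 1 ≤ t →
      σ t ≥ (1 - γ) * ((m t) ^ 2 +
        (η - γ) * ∑ s ∈ Icc 1 (t - 1), η ^ (t - s - 1) * (m s) ^ 2) := by
  have hη0 : 0 ≤ η := hγ0.trans hγη
  intro t ht
  induction t, ht using Nat.le_induction with
  | base =>
    have h1 := hσ 1 le_rfl
    have h2 := hm 1 le_rfl
    simp [hσ0, hm0] at h1 h2
    simp only [Nat.sub_self, Icc_eq_empty_of_lt (by norm_num : (0:ℕ) < 1)]
    simp [h1, h2]
    nlinarith [sq_nonneg (g 1)]
  | succ n hn ih =>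
    obtain ⟨k, rfl⟩ : ∃ k, n = k + 1 := ⟨n - 1, (Nat.succ_pred_eq_of_pos hn).symm⟩
    have hσs := hσ (k + 2) (by omega)
    have hms := hm (k + 2) (by omega)
    simp only [show k + 2 - 1 = k + 1 from rfl] at hσs hms
    -- rewrite the new sum
    have hsum : ∑ s ∈ Icc 1 (k + 2 - 1), η ^ (k + 2 - s - 1) * (m s) ^ 2
        = (m (k + 1)) ^ 2 + η * ∑ s ∈ Icc 1 (k + 1 - 1), η ^ (k + 1 - s - 1) * (m s) ^ 2 := by
      rw [show k + 2 - 1 = k + 1 from rfl, Finset.sum_Icc_succ_top (by omega : 1 ≤ k + 1)]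
      rw [show k + 1 - 1 = k from rfl, Finset.mul_sum]
      rw [show k + 2 - (k + 1) - 1 = 0 from by omega, pow_zero, one_mul]
      rw [add_comm]
      congr 1
      apply Finset.sum_congr rfl
      intro s hs
      simp only [Finset.mem_Icc] at hs
      rw [show k + 2 - s - 1 = (k - s) + 1 from by omega, show k + 1 - s - 1 = k - s from by omega,
        pow_succ]
      ring
    rw [hsum]
    have hg : g (k + 2) = m (k + 2) - γ * m (k + 1) := by linarith
    have key : (g (k + 2)) ^ 2 ≥ (1 - γ) * ((m (k + 2)) ^ 2 - γ * (m (k + 1)) ^ 2) := by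
      rw [hg]
      nlinarith [mul_nonneg hγ0 (sq_nonneg (m (k + 2) - m (k + 1)))]
    have hmul := mul_le_mul_of_nonneg_left ih hη0
    set S := ∑ s ∈ Icc 1 (k + 1 - 1), η ^ (k + 1 - s - 1) * (m s) ^ 2 with hS
    rw [hσs]
    nlinarith [hmul, key]
end

section
/- Suppose σ_{t,i} = η σ_{t-1,i} + g_{t,i}² with η < 1, γ ≤ η, and κ σ_{t,i} ≥ σ_{t-1,i} for all t with κ < 1, and m_{t,i} = γ m_{t-1,i} + g_{t,i}. Then σ_{t,i} ≥ ((1-κ)/(1-κ^t))(1-γ) ∑_{s=1}^t m_{s,i}², and in particular σ_{t,i} > (1-ν)² ∑_{s=1}^t m_{s,i}² where ν = max(γ, κ), whenever the sum is positive. -/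
open Finset

/-- with `σ_t = η σ_{t-1} + g_t²`, `m_t = γ m_{t-1} + g_t`,
`σ_0 = m_0 = 0`, `0 ≤ γ ≤ η < 1`, `0 < κ < 1` and `κ σ_t ≥ σ_{t-1}` for all `t ≥ 1`,
one has `σ_t ≥ ((1-κ)/(1-κ^t))(1-γ) ∑_{s=1}^t m_s²`, and in particular
`σ_t > (1-ν)² ∑_{s=1}^t m_s²` with `ν = max(γ,κ)` whenever the sum is positive. -/
theorem stmt10 (γ η κ ν : ℝ) (hγ0 : 0 ≤ γ) (hγη : γ ≤ η) (hη : η < 1)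
    (hκ0 : 0 < κ) (hκ1 : κ < 1) (hν : ν = max γ κ)
    (g m σ : ℕ → ℝ) (hm0 : m 0 = 0) (hσ0 : σ 0 = 0)
    (hm : ∀ t, 1 ≤ t → m t = γ * m (t - 1) + g t)
    (hσ : ∀ t, 1 ≤ t → σ t = η * σ (t - 1) + (g t) ^ 2)
    (hκσ : ∀ t, 1 ≤ t → κ * σ t ≥ σ (t - 1)) :
    ∀ t, 1 ≤ t →
      σ t ≥ ((1 - κ) / (1 - κ ^ t)) * (1 - γ) * ∑ s ∈ Icc 1 t, (m s) ^ 2 ∧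
      (0 < ∑ s ∈ Icc 1 t, (m s) ^ 2 →
        σ t > (1 - ν) ^ 2 * ∑ s ∈ Icc 1 t, (m s) ^ 2) := by
  have hγ1 : γ < 1 := lt_of_le_of_lt hγη hη
  -- basic momentum inequality
  have hA : ∀ s, (1 - γ) * (m s) ^ 2 ≤ σ s := by
    intro s
    induction s with
    | zero => simp [hσ0, hm0]
    | succ n ih =>
      have h1 : m (n + 1) = γ * m n + g (n + 1) := by simpa using hm (n + 1) (by omega)
      have h2 : σ (n + 1) = η * σ n + (g (n + 1)) ^ 2 := by simpa using hσ (n + 1) (by omega)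
      have hσn : 0 ≤ σ n := le_trans (mul_nonneg (by linarith) (sq_nonneg _)) ih
      have hηγ : (η - γ) * σ n ≥ 0 := mul_nonneg (by linarith) hσn
      have hγih : γ * ((1 - γ) * (m n) ^ 2) ≤ γ * σ n :=
        mul_le_mul_of_nonneg_left ih hγ0
      rw [h1, h2]
      nlinarith [sq_nonneg ((1 - γ) * m n - g (n + 1)),
        mul_nonneg hγ0 (sq_nonneg ((1 - γ) * m n - g (n + 1)))]
  -- geometric bound on partial sums of σ
  have hB : ∀ t : ℕ, (1 - κ) * ∑ s ∈ Icc 1 t, σ s ≤ (1 - κ ^ t) * σ t := by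
    intro t
    induction t with
    | zero => simp
    | succ n ih =>
      have hsum : ∑ s ∈ Icc 1 (n + 1), σ s = (∑ s ∈ Icc 1 n, σ s) + σ (n + 1) :=
        Finset.sum_Icc_succ_top (by omega) _
      have hκn : σ n ≤ κ * σ (n + 1) := by simpa using hκσ (n + 1) (by omega)
      have hκn0 : (0:ℝ) ≤ 1 - κ ^ n := by
        have := pow_le_one₀ hκ0.le hκ1.le (n := n); linarith
      have h1 : (1 - κ ^ n) * σ n ≤ (1 - κ ^ n) * (κ * σ (n + 1)) :=
        mul_le_mul_of_nonneg_left hκn hκn0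
      have hp : κ ^ (n + 1) = κ ^ n * κ := pow_succ κ n
      have h3 : (1 - κ ^ n) * (κ * σ (n + 1)) + (1 - κ) * σ (n + 1)
          = (1 - κ ^ (n + 1)) * σ (n + 1) := by rw [hp]; ring
      rw [hsum]
      linarith [ih, h1, h3]
  intro t ht
  have hκt1 : κ ^ t < 1 := pow_lt_one₀ hκ0.le hκ1 (by omega)
  have hκtpos : 0 < κ ^ t := pow_pos hκ0 t
  have hd : 0 < 1 - κ ^ t := by linarith
  set S := ∑ s ∈ Icc 1 t, (m s) ^ 2 with hS
  have hS0 : 0 ≤ S := Finset.sum_nonneg fun s _ => sq_nonneg _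
  have hsum : (1 - γ) * S ≤ ∑ s ∈ Icc 1 t, σ s := by
    rw [hS, Finset.mul_sum]
    exact Finset.sum_le_sum fun s _ => hA s
  have key : (1 - κ) * ((1 - γ) * S) ≤ (1 - κ ^ t) * σ t := by
    have h1 : (1 - κ) * ((1 - γ) * S) ≤ (1 - κ) * ∑ s ∈ Icc 1 t, σ s :=
      mul_le_mul_of_nonneg_left hsum (by linarith)
    linarith [hB t]
  constructor
  · rw [ge_iff_le, show ((1 - κ) / (1 - κ ^ t)) * (1 - γ) * S
        = ((1 - κ) * ((1 - γ) * S)) / (1 - κ ^ t) by ring, div_le_iff₀ hd]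
    linarith
  · intro hSpos
    have hν1 : ν < 1 := by rw [hν]; exact max_lt hγ1 hκ1
    have hνκ : κ ≤ ν := by rw [hν]; exact le_max_right _ _
    have hνγ : γ ≤ ν := by rw [hν]; exact le_max_left _ _
    have hfac : (1 - ν) ^ 2 ≤ (1 - κ) * (1 - γ) := by nlinarith
    have hstrict : (1 - κ ^ t) * ((1 - ν) ^ 2 * S) < (1 - κ) * ((1 - γ) * S) := by
      have hν0 : 0 < 1 - ν := by linarith
      have hp2 : 0 < (1 - ν) ^ 2 := by positivity
      have h5 : (1 - κ ^ t) * ((1 - ν) ^ 2 * S) < 1 * ((1 - ν) ^ 2 * S) :=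
        mul_lt_mul_of_pos_right (by linarith) (mul_pos hp2 hSpos)
      have h6 : (1 - ν) ^ 2 * S ≤ (1 - κ) * (1 - γ) * S :=
        mul_le_mul_of_nonneg_right hfac hS0
      nlinarith [h5, h6]
    have h7 : (1 - κ ^ t) * ((1 - ν) ^ 2 * S) < (1 - κ ^ t) * σ t :=
      lt_of_lt_of_le hstrict key
    exact (mul_lt_mul_iff_right₀ hd).mp h7
end
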